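/- arXiv:2312.03534 — 3 statements merged into one kernel-verified Lean document; each statement's English description precedes it below -/
import Mathlib

section
/- Let ℋ be a finite-dimensional complex inner product space, N ≥ 2, and let U_0, …, U_{N−2} be unitary operators on ℋ. Let {|0⟩, …, |N−1⟩} be the standard orthonormal basis of ℂ^N, and define the clock operator 𝒞 on ℂ^N ⊗ ℋ by 𝒞 = ∑_{n=0}^{N−2} ( |n+1⟩⟨n+1| ⊗ I − |n+1⟩⟨n| ⊗ U_n + |n⟩⟨n| ⊗ I − |n⟩⟨n+1| ⊗ U_n† ). If ψ_0, …, ψ_{N−1} ∈ ℋ satisfy ψ_{n+1} = U_n ψ_n for all 0 ≤ n ≤ N−2, then the history state Ψ = ∑_{n=0}^{N−1} |n⟩ ⊗ ψ_n satisfies 𝒞 Ψ = 0. -/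
open scoped TensorProduct

/-- The rank-one operator `|m⟩⟨n|` on `ℂ^N`, where `|0⟩, …, |N−1⟩` is the
standard orthonormal basis of `ℂ^N`. -/
noncomputable def ketbra (N : ℕ) (m n : Fin N) :
    EuclideanSpace ℂ (Fin N) →ₗ[ℂ] EuclideanSpace ℂ (Fin N) :=
  (LinearMap.toSpanSingleton ℂ (EuclideanSpace ℂ (Fin N))
      (EuclideanSpace.single m 1)).comp
    ((innerSL ℂ (EuclideanSpace.single n (1 : ℂ))).toLinearMap)

/-- The Feynman clock operator
`𝒞 = ∑_{n=0}^{N−2} (|n+1⟩⟨n+1| ⊗ I − |n+1⟩⟨n| ⊗ U_n + |n⟩⟨n| ⊗ I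
  − |n⟩⟨n+1| ⊗ U_n†)` on `ℂ^N ⊗ ℋ`. -/
noncomputable def clockOp {H : Type*} [NormedAddCommGroup H]
    [InnerProductSpace ℂ H] [FiniteDimensional ℂ H]
    (N : ℕ) (U : ℕ → (H →ₗ[ℂ] H)) :
    (EuclideanSpace ℂ (Fin N)) ⊗[ℂ] H →ₗ[ℂ] (EuclideanSpace ℂ (Fin N)) ⊗[ℂ] H :=
  ∑ n ∈ (Finset.range (N - 1)).attach,
    (TensorProduct.map
        (ketbra N ⟨n.1 + 1, by have := Finset.mem_range.mp n.2; omega⟩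
                  ⟨n.1 + 1, by have := Finset.mem_range.mp n.2; omega⟩)
        LinearMap.id
      - TensorProduct.map
        (ketbra N ⟨n.1 + 1, by have := Finset.mem_range.mp n.2; omega⟩
                  ⟨n.1, by have := Finset.mem_range.mp n.2; omega⟩)
        (U n.1)
      + TensorProduct.map
        (ketbra N ⟨n.1, by have := Finset.mem_range.mp n.2; omega⟩
                  ⟨n.1, by have := Finset.mem_range.mp n.2; omega⟩)
        LinearMap.id
      - TensorProduct.map
        (ketbra N ⟨n.1, by have := Finset.mem_range.mp n.2; omega⟩
                  ⟨n.1 + 1, by have := Finset.mem_range.mp n.2; omega⟩)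
        (LinearMap.adjoint (U n.1)))

lemma ketbra_single (N : ℕ) (a b m : Fin N) :
    ketbra N a b (EuclideanSpace.single m 1) =
      if b = m then EuclideanSpace.single a 1 else 0 := by
  simp only [ketbra, LinearMap.comp_apply, ContinuousLinearMap.coe_coe, innerSL_apply_apply,
    EuclideanSpace.inner_single_left, map_one, one_mul, EuclideanSpace.single_apply,
    LinearMap.toSpanSingleton_apply]
  split <;> simp

lemma map_ketbra_sum {H : Type*} [NormedAddCommGroup H]
    [InnerProductSpace ℂ H] [FiniteDimensional ℂ H]
    (N : ℕ) (a b : Fin N) (V : H →ₗ[ℂ] H) (ψ : ℕ → H) :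
    TensorProduct.map (ketbra N a b) V
        (∑ m : Fin N, (EuclideanSpace.single m (1 : ℂ)) ⊗ₜ[ℂ] ψ m.1)
      = (EuclideanSpace.single a (1 : ℂ)) ⊗ₜ[ℂ] V (ψ b.1) := by
  rw [map_sum]
  simp only [TensorProduct.map_tmul, ketbra_single, TensorProduct.ite_tmul]
  simp

/-- If `ψ_{n+1} = U_n ψ_n` for all `0 ≤ n ≤ N−2` with `U_n` unitary, then the
history state `Ψ = ∑_{n=0}^{N−1} |n⟩ ⊗ ψ_n` is annihilated by the clock
operator: `𝒞 Ψ = 0`. -/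
theorem clockOp_history_state_eq_zero {H : Type*} [NormedAddCommGroup H]
    [InnerProductSpace ℂ H] [FiniteDimensional ℂ H]
    (N : ℕ) (hN : 2 ≤ N) (U : ℕ → (H →ₗ[ℂ] H))
    (hU : ∀ n ≤ N - 2,
      LinearMap.adjoint (U n) ∘ₗ U n = LinearMap.id ∧
      U n ∘ₗ LinearMap.adjoint (U n) = LinearMap.id)
    (ψ : ℕ → H) (hψ : ∀ n ≤ N - 2, ψ (n + 1) = U n (ψ n)) :
    clockOp N U (∑ n : Fin N, (EuclideanSpace.single n (1 : ℂ)) ⊗ₜ[ℂ] ψ n.1)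
      = 0 := by
  classical
  unfold clockOp
  rw [LinearMap.sum_apply]
  apply Finset.sum_eq_zero
  intro n _
  have hn : n.1 ≤ N - 2 := by have := Finset.mem_range.mp n.2; omega
  simp only [LinearMap.sub_apply, LinearMap.add_apply, map_ketbra_sum]
  have h1 : ψ (n.1 + 1) = U n.1 (ψ n.1) := hψ n.1 hn
  have h2 : LinearMap.adjoint (U n.1) (ψ (n.1 + 1)) = ψ n.1 := by
    rw [h1, ← LinearMap.comp_apply, (hU n.1 hn).1, LinearMap.id_apply]
  have h3 : LinearMap.adjoint (U n.1) (U n.1 (ψ n.1)) = ψ n.1 := by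
    rw [← h1, h2]
  simp only [LinearMap.id_apply, h1, h3]
  abel
end

section
/- Define gray : ℕ → ℕ by gray(n) = n XOR (n >> 1), where XOR is bitwise exclusive-or and >> is the right bit-shift. Then for every n ∈ ℕ, the number gray(n) XOR gray(n+1) is a power of two; that is, the binary representations of gray(n) and gray(n+1) differ in exactly one bit. -/
/-- The Gray code of `n`: `n XOR (n >> 1)`. -/
def gray (n : ℕ) : ℕ := n ^^^ (n >>> 1)

lemma xor_shiftRight_one (a b : ℕ) : (a ^^^ b) >>> 1 = (a >>> 1) ^^^ (b >>> 1) := by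
  apply Nat.eq_of_testBit_eq
  intro i
  simp [Nat.testBit_shiftRight, Nat.testBit_xor]

lemma xor_succ_eq (n : ℕ) : ∃ t : ℕ, n ^^^ (n + 1) = 2 ^ (t + 1) - 1 := by
  induction n using Nat.strong_induction_on with
  | _ n ih =>
    rcases Nat.even_or_odd n with ⟨m, hm⟩ | ⟨m, hm⟩
    · refine ⟨0, ?_⟩
      subst hm
      apply Nat.eq_of_testBit_eq
      intro i
      simp only [Nat.testBit_xor, Nat.testBit_two_pow_sub_one]
      rcases i with _ | i
      · simp [Nat.testBit_zero]
        omega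
      · rw [Nat.testBit_add_one, Nat.testBit_add_one]
        have h1 : (m + m) / 2 = m := by omega
        have h2 : (m + m + 1) / 2 = m := by omega
        rw [h1, h2]
        simp
    · obtain ⟨t, ht⟩ := ih m (by omega)
      refine ⟨t + 1, ?_⟩
      subst hm
      apply Nat.eq_of_testBit_eq
      intro i
      have h2 : (2:ℕ) ^ (t+1) ≥ 1 := Nat.one_le_two_pow
      rcases i with _ | i
      · rw [Nat.testBit_xor]
        simp only [Nat.testBit_zero]
        have e4 : (2:ℕ) ^ (t + 1 + 1) = 4 * 2 ^ t := by ring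
        rw [show (2 * m + 1) % 2 = 1 from by omega,
          show (2 * m + 1 + 1) % 2 = 0 from by omega,
          show (2 ^ (t + 1 + 1) - 1) % 2 = 1 from by omega]
        simp
      · have e1 : 2 * m + 1 + 1 = 2 * (m + 1) := by ring
        rw [e1, Nat.testBit_add_one, Nat.testBit_add_one]
        have d1 : (2 * m + 1 ^^^ 2 * (m + 1)) / 2 = m ^^^ (m + 1) := by
          rw [← Nat.shiftRight_one, xor_shiftRight_one,
            Nat.shiftRight_one, Nat.shiftRight_one]
          congr 1 <;> omega
        have d2 : (2 ^ (t + 1 + 1) - 1) / 2 = 2 ^ (t + 1) - 1 := by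
          have e4 : (2:ℕ) ^ (t + 1 + 1) = 2 * 2 ^ (t + 1) := by ring
          omega
        rw [d1, d2, ht]

lemma gray_two_pow_sub_one (t : ℕ) : gray (2 ^ (t + 1) - 1) = 2 ^ t := by
  unfold gray
  have h1 : (2 ^ (t + 1) - 1) >>> 1 = 2 ^ t - 1 := by
    rw [Nat.shiftRight_one]; omega
  rw [h1]
  apply Nat.eq_of_testBit_eq
  intro i
  simp only [Nat.testBit_xor, Nat.testBit_two_pow_sub_one, Nat.testBit_two_pow]
  by_cases h : i < t
  · simp [h, Nat.lt_succ_of_lt h, Nat.ne_of_gt h]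
  · by_cases h2 : i = t
    · simp [h2]
    · have h3 : ¬ i < t + 1 := by omega
      simp [h, h3]
      omega

/-- For every `n`, `gray n XOR gray (n+1)` is a power of two; i.e. the binary
representations of `gray n` and `gray (n+1)` differ in exactly one bit. -/
theorem gray_xor_succ_isPowerOfTwo (n : ℕ) : ∃ k : ℕ, gray n ^^^ gray (n + 1) = 2 ^ k := by
  obtain ⟨t, ht⟩ := xor_succ_eq n
  refine ⟨t, ?_⟩
  have key : gray n ^^^ gray (n + 1) = gray (n ^^^ (n + 1)) := by
    unfold gray
    rw [xor_shiftRight_one]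
    rw [Nat.xor_assoc, ← Nat.xor_assoc (n >>> 1), Nat.xor_comm (n >>> 1) (n+1),
      Nat.xor_assoc, ← Nat.xor_assoc]
  rw [key, ht, gray_two_pow_sub_one]
end

section
/- Define gray : ℕ → ℕ by gray(n) = n XOR (n >> 1). Then for every m ≥ 1 and every k with 0 ≤ k ≤ m − 1, the number of indices n with 0 ≤ n < 2^m − 1 such that gray(n) XOR gray(n+1) = 2^k equals 2^{m−1−k}. In particular, the least significant bit flips in exactly half of the 2^m − 1 transitions of the m-bit Gray code, and bit k flips in approximately a fraction 1/2^{k+1} of them. -/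
open Finset

def grayFlip (n : ℕ) : ℕ := gray n ^^^ gray (n + 1)

theorem testBit_gray (n i : ℕ) : (gray n).testBit i = (n.testBit i ^^ n.testBit (i + 1)) := by
  simp [gray, Nat.testBit_xor, Nat.testBit_shiftRight, add_comm]

theorem grayFlip_two_mul (m : ℕ) : grayFlip (2 * m) = 1 := by
  refine Nat.eq_of_testBit_eq fun i => ?_
  simp only [grayFlip, Nat.testBit_xor, testBit_gray]
  cases i <;> simp [Nat.testBit_add_one, Nat.testBit_zero, Nat.mul_add_div]

theorem grayFlip_two_mul_add_one (m : ℕ) : grayFlip (2 * m + 1) = 2 * grayFlip m := by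
  refine Nat.eq_of_testBit_eq fun i => ?_
  simp only [grayFlip, Nat.testBit_xor, testBit_gray, show 2 * m + 1 + 1 = 2 * (m + 1) by ring]
  cases i <;> simp [Nat.testBit_add_one, Nat.testBit_zero, Nat.mul_add_div, testBit_gray,
    Nat.testBit_xor]
  omega

theorem grayFlip_eq_two_pow_iff (k n : ℕ) : grayFlip n = 2 ^ k ↔ n % 2 ^ (k + 1) = 2 ^ k - 1 := by
  induction k generalizing n with
  | zero =>
    obtain ⟨m, rfl | rfl⟩ : ∃ m, n = 2 * m ∨ n = 2 * m + 1 := ⟨n / 2, by omega⟩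
    · simp [grayFlip_two_mul]
    · simp [grayFlip_two_mul_add_one]
  | succ k ih =>
    have hk : 2 ^ (k + 1) = 2 * 2 ^ k := pow_succ' 2 k
    have hk1 := Nat.one_le_two_pow (n := k)
    rw [pow_succ' 2 (k + 1), Nat.mod_mul]
    obtain ⟨m, rfl | rfl⟩ : ∃ m, n = 2 * m ∨ n = 2 * m + 1 := ⟨n / 2, by omega⟩
    · rw [grayFlip_two_mul]
      omega
    · rw [grayFlip_two_mul_add_one, show (2 * m + 1) / 2 = m by omega]
      have := ih m
      omega

theorem card_filter_range_mul_mod_eq {r v : ℕ} (t : ℕ) (hv : v < r) :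
    #{n ∈ range (r * t) | n % r = v} = t := by
  have h := Nat.count_modEq_card (r * t) (v.zero_le.trans_lt hv) v
  simp only [Nat.count_eq_card_filter_range, Nat.ModEq, Nat.mod_eq_of_lt hv] at h
  simpa [Nat.mul_mod_right, Nat.mul_div_cancel_left _ (v.zero_le.trans_lt hv)] using h

theorem card_filter_range_mul_sub_one_mod_eq {r v : ℕ} (t : ℕ) (hv : v + 1 < r) :
    #{n ∈ range (r * t - 1) | n % r = v} = t := by
  rcases t.eq_zero_or_pos with rfl | ht
  · simp
  have hrt : r ≤ r * t := Nat.le_mul_of_pos_right r ht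
  have hlast : (r * t - 1) % r = r - 1 := by
    rw [show r * t - 1 = r * (t - 1) + (r - 1) by rw [Nat.mul_sub_one]; omega,
      Nat.mul_add_mod, Nat.mod_eq_of_lt (by omega)]
  have h := card_filter_range_mul_mod_eq t (show v < r by omega)
  rwa [← Nat.sub_add_cancel (show 1 ≤ r * t by omega), range_add_one, filter_insert,
    if_neg (by omega)] at h

/-- In the `m`-bit Gray code, among the `2^m − 1` transitions `n → n+1` with
`0 ≤ n < 2^m − 1`, exactly `2^(m−1−k)` of them flip bit `k`
(i.e. satisfy `gray n XOR gray (n+1) = 2^k`), for every `0 ≤ k ≤ m − 1`. -/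
theorem gray_bitflip_count (m k : ℕ) (hm : 1 ≤ m) (hk : k ≤ m - 1) :
    ((Finset.range (2 ^ m - 1)).filter (fun n => gray n ^^^ gray (n + 1) = 2 ^ k)).card
      = 2 ^ (m - 1 - k) := by
  simp only [← grayFlip.eq_1, grayFlip_eq_two_pow_iff]
  have hsplit : 2 ^ m = 2 ^ (k + 1) * 2 ^ (m - 1 - k) := by rw [← pow_add]; congr 1; omega
  rw [hsplit]
  apply card_filter_range_mul_sub_one_mod_eq
  have := Nat.one_le_two_pow (n := k)
  rw [pow_succ]
  omega
end
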